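/- arXiv:math/0511267 — 5 statements merged into one kernel-verified Lean document; each statement's English description precedes it below -/
import Mathlib

section
/- Let k ≥ 2 and let a_1,…,a_k be nonzero real numbers with a_0 := 0 and a_{k+1} := 0 (with the convention that in the term for i = k the expression a_{k-1}+2a_k+a_{k+1} is replaced by a_{k-1}+a_k when appropriate). Then in the polynomial ring ℝ[α_1,…,α_k,λ_1,…,λ_k] the following identity holds: α_1^2 + … + α_k^2 − a_1λ_1 − … − a_kλ_k = −Σ_{i=1}^{k} (a_i/(a_{i-1}+2a_i+a_{i+1}))·[det(a_{i-1}+a_i, α_i+α_{i+1}; α_i, λ_i) + det(a_i+a_{i+1}, α_i+α_{i+1}; α_{i+1}, λ_i)] + Σ_{i=1}^{k-1} (a_i·det(a_{i-1}+a_i, a_i+a_{i+1}; α_i, α_{i+1})^2) / ((a_{i-1}+2a_i+a_{i+1})(a_{i-1}+a_i)(a_i+a_{i+1})), where α_{k+1} := 0. -/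
/-!
Put `g i = a i * α i ^ 2 / (a (i - 1) + a i)`. For `i < k` the `i`-th summand of the
right-hand side equals `α (i + 1) ^ 2 - a i * λ i - (g (i + 1) - g i)`, the `k`-th one equals
`g k - a k * λ k`, and `g 1 = α 1 ^ 2` because `a 0 = 0`; so the right-hand side telescopes
to `∑ α i ^ 2 - ∑ a i * λ i`.
-/

open Finset

section
variable {K : Type*} [Field K]

lemma interior_summand_eq (p q r x y l : K) (hpq : p + q ≠ 0) (hqr : q + r ≠ 0)
    (hD : p + 2 * q + r ≠ 0) :
    -(q / (p + 2 * q + r) *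
        (!![p + q, x + y; x, l].det + !![q + r, x + y; y, l].det)) +
      q * !![p + q, q + r; x, y].det ^ 2 / ((p + 2 * q + r) * (p + q) * (q + r)) =
    y ^ 2 - q * l - (r * y ^ 2 / (q + r) - q * x ^ 2 / (p + q)) := by
  rw [show p + 2 * q + r = (p + q) + (q + r) by ring] at *
  simp only [Matrix.det_fin_two_of]
  field_simp
  ring

lemma last_summand_eq (p q x l : K) (hpq : p + q ≠ 0) :
    -(q / (p + q) * (!![p + q, x + 0; x, l].det + 0)) = q * x ^ 2 / (p + q) - q * l := by
  simp only [Matrix.det_fin_two_of]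
  field_simp
  ring

end

section
variable {M : Type*} [AddCommGroup M]

lemma sum_Icc_one_succ (f : ℕ → M) (m : ℕ) :
    ∑ i ∈ Icc 1 (m + 1), f i = f 1 + ∑ i ∈ Icc 1 m, f (i + 1) := by
  rw [← Ico_add_one_right_eq_Icc, ← Ico_add_one_right_eq_Icc,
    sum_eq_sum_Ico_succ_bot (by omega), sum_Ico_add']

lemma sum_Icc_sub_sum_Icc_eq_telescope (f u g : ℕ → M) (m : ℕ) (hg : g 1 = f 1) :
    ∑ i ∈ Icc 1 (m + 1), f i - ∑ i ∈ Icc 1 (m + 1), u i =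
      ∑ i ∈ Icc 1 m, (f (i + 1) - u i - (g (i + 1) - g i)) + (g (m + 1) - u (m + 1)) := by
  rw [sum_sub_distrib, sum_sub_distrib, ← Ico_add_one_right_eq_Icc 1 m,
    sum_Ico_sub g (by omega), Ico_add_one_right_eq_Icc, sum_Icc_one_succ,
    sum_Icc_succ_top (by omega), hg]
  abel

end

theorem stmt_2_general (k : ℕ) (a : ℕ → ℝ)
    (ha0 : a 0 = 0)
    (hden : ∀ i, 1 ≤ i → i ≤ k →
      a (i - 1) + a i ≠ 0 ∧ a i + a (i + 1) ≠ 0 ∧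
      (if i = k then a (k - 1) + a k else a (i - 1) + 2 * a i + a (i + 1)) ≠ 0) :
    ∀ α lam : ℕ → ℝ, α (k + 1) = 0 →
      (∑ i ∈ Finset.Icc 1 k, (α i) ^ 2) - (∑ i ∈ Finset.Icc 1 k, a i * lam i) =
        -(∑ i ∈ Finset.Icc 1 k,
            (a i / (if i = k then a (k - 1) + a k else a (i - 1) + 2 * a i + a (i + 1))) *
              (Matrix.det !![a (i - 1) + a i, α i + α (i + 1); α i, lam i] +
                if i = k then 0 else
                  Matrix.det !![a i + a (i + 1), α i + α (i + 1); α (i + 1), lam i]))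
        + ∑ i ∈ Finset.Icc 1 (k - 1),
            a i * (Matrix.det !![a (i - 1) + a i, a i + a (i + 1); α i, α (i + 1)]) ^ 2 /
              ((if i = k then a (k - 1) + a k else a (i - 1) + 2 * a i + a (i + 1)) *
                (a (i - 1) + a i) * (a i + a (i + 1))) := by
  intro α lam hα
  rcases k with _ | m
  · simp
  set g : ℕ → ℝ := fun i => a i * α i ^ 2 / (a (i - 1) + a i)
  have hg : g 1 = α 1 ^ 2 := by
    have h1 : a 1 ≠ 0 := by simpa [ha0] using (hden 1 le_rfl (by omega)).1
    simp only [g, Nat.sub_self, ha0, zero_add]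
    field_simp
  have hlast : _ = g (m + 1) - _ := last_summand_eq (a m) (a (m + 1)) (α (m + 1))
    (lam (m + 1)) (by simpa using (hden (m + 1) (by omega) le_rfl).1)
  rw [Nat.add_sub_cancel, sum_Icc_sub_sum_Icc_eq_telescope (fun i => α i ^ 2) _ g m hg,
    sum_Icc_succ_top (by omega), if_pos rfl, if_pos rfl, hα, Nat.add_sub_cancel, neg_add,
    ← sum_neg_distrib, add_right_comm, ← sum_add_distrib, ← hlast]
  congr 1
  refine sum_congr rfl fun i hi => ?_
  obtain ⟨hi1, him⟩ := mem_Icc.mp hi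
  obtain ⟨hb, hc, hD⟩ := hden i hi1 (by omega)
  simp only [if_neg (show i ≠ m + 1 by omega)] at hD ⊢
  exact (interior_summand_eq _ _ _ (α i) (α (i + 1)) (lam i) hb hc hD).symm

/-- Lemma 2.8 of the paper (Grassmannian of lines, `n = 2k`): a polynomial identity in
the `α i`, `λ i` with coefficients rational functions of the `a i`, where by convention
`a 0 = 0`, `a (k+1) = 0`, `α (k+1) = 0`, and in the term `i = k` the denominator
`a (k-1) + 2·a k + a (k+1)` is replaced by `a (k-1) + a k` and the second 2×2
determinant is omitted. -/
theorem stmt_2 (k : ℕ) (hk : 2 ≤ k) (a : ℕ → ℝ)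
    (ha0 : a 0 = 0) (hak1 : a (k + 1) = 0)
    (hne : ∀ i, 1 ≤ i → i ≤ k → a i ≠ 0)
    (hden : ∀ i, 1 ≤ i → i ≤ k →
      a (i - 1) + a i ≠ 0 ∧ a i + a (i + 1) ≠ 0 ∧
      (if i = k then a (k - 1) + a k else a (i - 1) + 2 * a i + a (i + 1)) ≠ 0) :
    ∀ α lam : ℕ → ℝ, α (k + 1) = 0 →
      (∑ i ∈ Finset.Icc 1 k, (α i) ^ 2) - (∑ i ∈ Finset.Icc 1 k, a i * lam i) =
        -(∑ i ∈ Finset.Icc 1 k,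
            (a i / (if i = k then a (k - 1) + a k else a (i - 1) + 2 * a i + a (i + 1))) *
              (Matrix.det !![a (i - 1) + a i, α i + α (i + 1); α i, lam i] +
                if i = k then 0 else
                  Matrix.det !![a i + a (i + 1), α i + α (i + 1); α (i + 1), lam i]))
        + ∑ i ∈ Finset.Icc 1 (k - 1),
            a i * (Matrix.det !![a (i - 1) + a i, a i + a (i + 1); α i, α (i + 1)]) ^ 2 /
              ((if i = k then a (k - 1) + a k else a (i - 1) + 2 * a i + a (i + 1)) *
                (a (i - 1) + a i) * (a i + a (i + 1))) :=
  stmt_2_general k a ha0 hden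
end

section
/- Let k ≥ 1 and let a_1,…,a_k be positive real numbers, and let α_1,…,α_k, λ_1,…,λ_k be real numbers (conventions a_0 = α_{k+1} = 0, n = 2k). Suppose α_1^2 + … + α_k^2 = a_1λ_1 + … + a_kλ_k, and suppose that for each i = 1,…,k the quantity Hodge_i := det(a_{i-1}+a_i, α_i+α_{i+1}; α_i, λ_i) + det(a_i+a_{i+1}, α_i+α_{i+1}; α_{i+1}, λ_i) is ≤ 0 (with the term involving a_{k+1} omitted for i = k). Then Hodge_i = 0 for all i, and det(a_{i-1}+a_i, a_i+a_{i+1}; α_i, α_{i+1}) = 0 for all i = 1,…,k-1. -/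
/-!
Write `s i = a (i - 1) + a i`. Since `a 0 = 0` and `α (k + 1) = 0`, splitting each
`α i ^ 2 = (a i + a (i - 1)) * α i ^ 2 / s i` between the indices `i` and `i - 1` turns
`∑ α i ^ 2 - ∑ a i * lam i` into `∑ splitDefect a α lam i`. By the identity
`x² / p + y² / q - (x + y)² / (p + q) = (q x - p y)² / (p q (p + q))`, each `splitDefect` is
`-a i * hodgeTerm k a α lam i / (s i + s (i + 1))` plus
`a i * det (s i, s (i + 1); α i, α (i + 1)) ^ 2` over a positive denominator (for `i = k` only
the first term, with denominator `s k`). Both terms are nonnegative and the total vanishes, so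
all of them vanish.
-/

open Finset Matrix

theorem Finset.sum_Icc_one_shift {M : Type*} [AddCommMonoid M] (f : ℕ → M) (k : ℕ) :
    ∑ i ∈ Icc 1 k, f (i + 1) + f 1 = ∑ i ∈ Icc 1 k, f i + f (k + 1) := by
  induction k with
  | zero => simp
  | succ k ih =>
    rw [sum_Icc_succ_top (by omega), sum_Icc_succ_top (by omega), add_right_comm, ih,
      add_assoc]

theorem sum_split_sq_eq_sum_sq {a α : ℕ → ℝ} {k : ℕ} (ha0 : a 0 = 0) (hαk1 : α (k + 1) = 0)
    (hs : ∀ i ∈ Icc 1 k, a (i - 1) + a i ≠ 0) :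
    ∑ i ∈ Icc 1 k, (a i * α i ^ 2 / (a (i - 1) + a i) + a i * α (i + 1) ^ 2 / (a i + a (i + 1)))
      = ∑ i ∈ Icc 1 k, α i ^ 2 := by
  have hshift := sum_Icc_one_shift (fun j ↦ a (j - 1) * α j ^ 2 / (a (j - 1) + a j)) k
  simp only [add_tsub_cancel_right, tsub_self, ha0, hαk1, zero_mul, zero_div, add_zero,
    ne_eq, OfNat.ofNat_ne_zero, not_false_eq_true, zero_pow, mul_zero] at hshift
  rw [sum_add_distrib, hshift, ← sum_add_distrib]
  refine sum_congr rfl fun i hi ↦ ?_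
  rw [← add_div, ← add_mul, add_comm (a i), mul_div_right_comm, div_self (hs i hi), one_mul]

theorem sq_div_sub_mul_eq_neg_det (a p x l : ℝ) (hp : p ≠ 0) :
    a * x ^ 2 / p - a * l = a / p * -det !![p, x; x, l] := by
  rw [det_fin_two_of]
  field_simp
  ring

theorem sq_div_add_sq_div_sub_mul_eq (a p q x y l : ℝ) (hp : p ≠ 0) (hq : q ≠ 0)
    (hpq : p + q ≠ 0) :
    a * x ^ 2 / p + a * y ^ 2 / q - a * l =
      a / (p + q) * -(det !![p, x + y; x, l] + det !![q, x + y; y, l]) +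
        a * det !![p, q; x, y] ^ 2 / (p * q * (p + q)) := by
  simp only [det_fin_two_of]
  field_simp
  ring

theorem div_mul_neg_nonneg_and_eq_zero {c p H : ℝ} (hc : 0 < c) (hp : 0 < p) (hH : H ≤ 0) :
    0 ≤ c / p * -H ∧ (c / p * -H = 0 → H = 0) := by
  refine ⟨by have := neg_nonneg.2 hH; positivity, fun h ↦ ?_⟩
  simpa [hc.ne', hp.ne'] using h

theorem pos_pred_add {a : ℕ → ℝ} {k i : ℕ} (ha0 : a 0 = 0)
    (hpos : ∀ j, 1 ≤ j → j ≤ k → 0 < a j) (hi1 : 1 ≤ i) (hik : i ≤ k) :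
    0 < a (i - 1) + a i := by
  have hai := hpos i hi1 hik
  have : 0 ≤ a (i - 1) := by
    rcases eq_or_ne i 1 with rfl | hi
    · exact ha0.ge
    · exact (hpos (i - 1) (by omega) (by omega)).le
  positivity

def hodgeTerm (k : ℕ) (a α lam : ℕ → ℝ) (i : ℕ) : ℝ :=
  det !![a (i - 1) + a i, α i + α (i + 1); α i, lam i] +
    if i = k then 0 else det !![a i + a (i + 1), α i + α (i + 1); α (i + 1), lam i]

noncomputable def splitDefect (a α lam : ℕ → ℝ) (i : ℕ) : ℝ :=
  a i * α i ^ 2 / (a (i - 1) + a i) + a i * α (i + 1) ^ 2 / (a i + a (i + 1)) - a i * lam i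

theorem splitDefect_nonneg_and_eq_zero {k i : ℕ} {a α lam : ℕ → ℝ}
    (ha0 : a 0 = 0) (hαk1 : α (k + 1) = 0) (hpos : ∀ j, 1 ≤ j → j ≤ k → 0 < a j)
    (hi1 : 1 ≤ i) (hik : i ≤ k) (hH : hodgeTerm k a α lam i ≤ 0) :
    0 ≤ splitDefect a α lam i ∧ (splitDefect a α lam i = 0 →
      hodgeTerm k a α lam i = 0 ∧
        (i ≠ k → det !![a (i - 1) + a i, a i + a (i + 1); α i, α (i + 1)] = 0)) := by
  have hai := hpos i hi1 hik
  have hp := pos_pred_add ha0 hpos hi1 hik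
  rcases eq_or_ne i k with rfl | hik'
  · have hdefect : splitDefect a α lam i = a i / (a (i - 1) + a i) *
        -det !![a (i - 1) + a i, α i; α i, lam i] := by
      rw [splitDefect, hαk1, ← sq_div_sub_mul_eq_neg_det _ _ _ _ hp.ne']
      ring
    have hhodge : hodgeTerm i a α lam i = det !![a (i - 1) + a i, α i; α i, lam i] := by
      simp [hodgeTerm, hαk1]
    rw [hhodge] at hH ⊢
    rw [hdefect]
    obtain ⟨hnonneg, hzero⟩ := div_mul_neg_nonneg_and_eq_zero hai hp hH
    exact ⟨hnonneg, fun h ↦ ⟨hzero h, fun h' ↦ absurd rfl h'⟩⟩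
  · have hq : 0 < a i + a (i + 1) := add_pos hai (hpos (i + 1) (by omega) (by omega))
    have hhodge : hodgeTerm k a α lam i = det !![a (i - 1) + a i, α i + α (i + 1); α i, lam i] +
        det !![a i + a (i + 1), α i + α (i + 1); α (i + 1), lam i] := by
      simp [hodgeTerm, hik']
    rw [hhodge] at hH ⊢
    rw [splitDefect, sq_div_add_sq_div_sub_mul_eq _ _ _ _ _ _ hp.ne' hq.ne' (by positivity)]
    obtain ⟨hnonneg, hzero⟩ := div_mul_neg_nonneg_and_eq_zero hai (add_pos hp hq) hH
    have hrest : 0 ≤ a i * det !![a (i - 1) + a i, a i + a (i + 1); α i, α (i + 1)] ^ 2 /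
        ((a (i - 1) + a i) * (a i + a (i + 1)) * (a (i - 1) + a i + (a i + a (i + 1)))) := by
      positivity
    refine ⟨add_nonneg hnonneg hrest, fun h ↦ ?_⟩
    obtain ⟨h₁, h₂⟩ := (add_eq_zero_iff_of_nonneg hnonneg hrest).1 h
    refine ⟨hzero h₁, fun _ ↦ ?_⟩
    simpa [hai.ne', hp.ne', hq.ne', (add_pos hp hq).ne'] using h₂

theorem stmt_3_general (k : ℕ) (a α lam : ℕ → ℝ)
    (ha0 : a 0 = 0) (hαk1 : α (k + 1) = 0)
    (hpos : ∀ i, 1 ≤ i → i ≤ k → 0 < a i)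
    (hP : (∑ i ∈ Finset.Icc 1 k, (α i) ^ 2) = ∑ i ∈ Finset.Icc 1 k, a i * lam i)
    (hodge : ∀ i, 1 ≤ i → i ≤ k →
      Matrix.det !![a (i - 1) + a i, α i + α (i + 1); α i, lam i] +
        (if i = k then 0 else
          Matrix.det !![a i + a (i + 1), α i + α (i + 1); α (i + 1), lam i]) ≤ 0) :
    (∀ i, 1 ≤ i → i ≤ k →
      Matrix.det !![a (i - 1) + a i, α i + α (i + 1); α i, lam i] +
        (if i = k then 0 else
          Matrix.det !![a i + a (i + 1), α i + α (i + 1); α (i + 1), lam i]) = 0) ∧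
    (∀ i, 1 ≤ i → i ≤ k - 1 →
      Matrix.det !![a (i - 1) + a i, a i + a (i + 1); α i, α (i + 1)] = 0) := by
  have hdefect (i : ℕ) (hi1 : 1 ≤ i) (hik : i ≤ k) :=
    splitDefect_nonneg_and_eq_zero (lam := lam) ha0 hαk1 hpos hi1 hik (hodge i hi1 hik)
  have hsum : ∑ i ∈ Icc 1 k, splitDefect a α lam i = 0 := by
    have hs (i : ℕ) (hi : i ∈ Icc 1 k) : a (i - 1) + a i ≠ 0 :=
      (pos_pred_add ha0 hpos (mem_Icc.1 hi).1 (mem_Icc.1 hi).2).ne'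
    rw [← sub_eq_zero.2 hP, ← sum_split_sq_eq_sum_sq ha0 hαk1 hs, ← sum_sub_distrib]
    rfl
  have hzero : ∀ i ∈ Icc 1 k, splitDefect a α lam i = 0 :=
    (sum_eq_zero_iff_of_nonneg fun i hi ↦
      (hdefect i (mem_Icc.1 hi).1 (mem_Icc.1 hi).2).1).1 hsum
  refine ⟨fun i hi1 hik ↦ ((hdefect i hi1 hik).2 (hzero i (mem_Icc.2 ⟨hi1, hik⟩))).1,
    fun i hi1 hik ↦ ((hdefect i hi1 (by omega)).2 (hzero i (mem_Icc.2 ⟨hi1, by omega⟩))).2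
      (by omega)⟩

/-- Corollary 2.9 of the paper, numerical core (`n = 2k`): if
`∑ α i ^ 2 = ∑ a i * λ i` and each Hodge-type expression `Hodge i` is `≤ 0`
(the second 2×2 determinant being omitted for `i = k`), then every `Hodge i`
vanishes and so do the 2×2 determinants `det (a (i-1)+a i, a i+a (i+1); α i, α (i+1))`. -/
theorem stmt_3 (k : ℕ) (hk : 1 ≤ k) (a α lam : ℕ → ℝ)
    (ha0 : a 0 = 0) (hak1 : a (k + 1) = 0) (hαk1 : α (k + 1) = 0)
    (hpos : ∀ i, 1 ≤ i → i ≤ k → 0 < a i)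
    (hP : (∑ i ∈ Finset.Icc 1 k, (α i) ^ 2) = ∑ i ∈ Finset.Icc 1 k, a i * lam i)
    (hodge : ∀ i, 1 ≤ i → i ≤ k →
      Matrix.det !![a (i - 1) + a i, α i + α (i + 1); α i, lam i] +
        (if i = k then 0 else
          Matrix.det !![a i + a (i + 1), α i + α (i + 1); α (i + 1), lam i]) ≤ 0) :
    (∀ i, 1 ≤ i → i ≤ k →
      Matrix.det !![a (i - 1) + a i, α i + α (i + 1); α i, lam i] +
        (if i = k then 0 else
          Matrix.det !![a i + a (i + 1), α i + α (i + 1); α (i + 1), lam i]) = 0) ∧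
    (∀ i, 1 ≤ i → i ≤ k - 1 →
      Matrix.det !![a (i - 1) + a i, a i + a (i + 1); α i, α (i + 1)] = 0) :=
  stmt_3_general k a α lam ha0 hαk1 hpos hP hodge
end

section
/- Let n ≥ 3 and let a_1,…,a_{n-1} be indeterminates (conventions a_0 = a_n = 0). Define in the field ℚ(a_1,…,a_{n-1}) the coefficients c_i = a_{n-i}/det(a_{i-1}, a_i; a_i, a_{i+1}) and d_i = a_i·a_{n-i}/[det(a_{i-1}, a_i; a_i, a_{i+1})·det(a_{i-1}, a_{n-i}; a_i, a_{n-i+1})·det(a_i, a_{n-i}; a_{i+1}, a_{n-i+1})] for i ≠ ⌈n/2⌉, and d_{⌈n/2⌉} := 0. Then in ℚ(a_1,…,a_{n-1})[α_1,…,α_n,λ_1,…,λ_{n-1}] the identity holds: Σ_{i=1}^{n} α_i·α_{n+1-i} − Σ_{i=1}^{n-1} a_{n-i}·λ_i = −Σ_{i=1}^{n-1} c_i·det3(a_{i-1}, a_i, α_i; a_i, a_{i+1}, α_{i+1}; α_i, α_{i+1}, λ_i) − Σ_{i=1}^{n-1} d_i·det3(a_{i-1}, a_i, a_{n-i}; a_i,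 a_{i+1}, a_{n-i+1}; α_i, α_{i+1}, α_{n-i+1})^2, where det3 denotes the 3×3 determinant with the three listed rows. -/
/-!
Write `D_i` for the determinant of `(a_{i-1}, a_i; a_i, a_{i+1})`. By the Schur complement, the
3×3 determinant ending in `λ_i` is `D_i λ_i` minus a quadratic form in `α_i, α_{i+1}`, so the
`λ`-terms cancel and, after clearing denominators, the `i`-th term of
`∑ (a_{n-i} λ_i - c_i det₃ - d_i det₃'²)` equals `α_i α_{n+1-i} - P(i, n+1-i) + Q(i, n-i)`,
where `P = skewProdTerm` and `Q = skewSqTerm` are alternating in their two indices.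
Summed over `i`, the `Q`-terms cancel in pairs under `i ↦ n - i` and the `P`-terms under
`i ↦ n + 1 - i`, except for the missing index `i = n`, whose term is `α_1 α_n` since
`a_0 = a_n = 0`; it supplies the last term of `∑ α_i α_{n+1-i}`.
-/

open Finset Matrix

theorem Finset.sum_Icc_reflect_eq_zero {M : Type*} [AddCommGroup M] (K : ℕ → ℕ → M)
    (hK : ∀ k m, K m k = -K k m) (hK₀ : ∀ k, K k k = 0) (lo N : ℕ) :
    ∑ i ∈ Icc lo (N - lo), K i (N - i) = 0 := by
  refine sum_involution (fun i _ => N - i) (fun i hi => ?_) (fun i _ hne heq => ?_)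
    (fun i hi => ?_) (fun i hi => ?_)
  · rw [mem_Icc] at hi
    rw [Nat.sub_sub_self (by omega), hK (N - i), neg_add_cancel]
  · rw [heq] at hne
    exact hne (hK₀ i)
  · rw [mem_Icc] at hi ⊢
    omega
  · rw [mem_Icc] at hi
    omega

section

variable {F : Type*} [Field F] (a α : ℕ → F)

noncomputable def skewProdTerm (k m : ℕ) : F :=
  -((a (k - 1) * α m - a (m - 1) * α k) * (a k * α m - a m * α k)) /
    (a (k - 1) * a m - a (m - 1) * a k)

noncomputable def skewSqTerm (k m : ℕ) : F :=
  -(a k * α (m + 1) - a m * α (k + 1)) ^ 2 / (a k * a (m + 1) - a m * a (k + 1))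

theorem skewProdTerm_swap (k m : ℕ) : skewProdTerm a α m k = -skewProdTerm a α k m := by
  unfold skewProdTerm
  rw [← neg_sub (a (k - 1) * a m), div_neg]
  ring

theorem skewProdTerm_self (k : ℕ) : skewProdTerm a α k k = 0 := by
  simp [skewProdTerm]

theorem skewSqTerm_swap (k m : ℕ) : skewSqTerm a α m k = -skewSqTerm a α k m := by
  unfold skewSqTerm
  rw [← neg_sub (a k * a (m + 1)), div_neg, ← neg_sub (a k * α (m + 1)), neg_sq]

theorem skewSqTerm_self (k : ℕ) : skewSqTerm a α k k = 0 := by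
  simp [skewSqTerm]

variable {a}

theorem summand_decomp_of_ne_zero (l : F) (i j : ℕ)
    (hD : det !![a (i - 1), a i; a i, a (i + 1)] ≠ 0)
    (hA : det !![a (i - 1), a j; a i, a (j + 1)] ≠ 0)
    (hB : det !![a i, a j; a (i + 1), a (j + 1)] ≠ 0) :
    a j * l - a j / det !![a (i - 1), a i; a i, a (i + 1)] *
        det !![a (i - 1), a i, α i; a i, a (i + 1), α (i + 1); α i, α (i + 1), l] -
      a i * a j / (det !![a (i - 1), a i; a i, a (i + 1)] *
          det !![a (i - 1), a j; a i, a (j + 1)] * det !![a i, a j; a (i + 1), a (j + 1)]) *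
        det !![a (i - 1), a i, a j; a i, a (i + 1), a (j + 1); α i, α (i + 1), α (j + 1)] ^ 2 =
      α i * α (j + 1) - skewProdTerm a α i (j + 1) + skewSqTerm a α i j := by
  rw [det_fin_two_of] at hD hA hB
  simp only [skewProdTerm, skewSqTerm, Nat.add_sub_cancel, det_fin_two_of, det_fin_three,
    of_apply, cons_val', cons_val_zero, cons_val_one, cons_val_two, head_cons, tail_cons,
    empty_val', cons_val_fin_one, head_fin_const]
  have hD' : a (i - 1) * a (i + 1) - a i ^ 2 ≠ 0 := by rwa [sq]
  field_simp
  ring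

theorem summand_decomp_diag (l : F) (i : ℕ) (hD : det !![a (i - 1), a i; a i, a (i + 1)] ≠ 0) :
    a i * l - a i / det !![a (i - 1), a i; a i, a (i + 1)] *
        det !![a (i - 1), a i, α i; a i, a (i + 1), α (i + 1); α i, α (i + 1), l] =
      α i * α (i + 1) - skewProdTerm a α i (i + 1) + skewSqTerm a α i i := by
  rw [det_fin_two_of] at hD
  simp only [skewProdTerm, skewSqTerm_self, Nat.add_sub_cancel, det_fin_two_of, det_fin_three,
    of_apply, cons_val', cons_val_zero, cons_val_one, cons_val_two, head_cons, tail_cons,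
    empty_val', cons_val_fin_one, head_fin_const]
  have hD' : a (i - 1) * a (i + 1) - a i ^ 2 ≠ 0 := by rwa [sq]
  field_simp
  ring

theorem summand_decomp_subdiag (l : F) {i : ℕ} (hi : 1 ≤ i)
    (hD : det !![a (i - 1), a i; a i, a (i + 1)] ≠ 0) :
    a (i - 1) * l - a (i - 1) / det !![a (i - 1), a i; a i, a (i + 1)] *
        det !![a (i - 1), a i, α i; a i, a (i + 1), α (i + 1); α i, α (i + 1), l] =
      α i * α i - skewProdTerm a α i i + skewSqTerm a α i (i - 1) := by
  rw [det_fin_two_of] at hD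
  simp only [skewProdTerm_self, skewSqTerm, Nat.sub_add_cancel hi, det_fin_two_of, det_fin_three,
    of_apply, cons_val', cons_val_zero, cons_val_one, cons_val_two, head_cons, tail_cons,
    empty_val', cons_val_fin_one, head_fin_const]
  have hD' : a (i - 1) * a (i + 1) - a i ^ 2 ≠ 0 := by rwa [sq]
  have hD'' : a i ^ 2 - a (i - 1) * a (i + 1) ≠ 0 := fun h => hD' (by linear_combination -h)
  field_simp
  ring

theorem skewProdTerm_boundary {n : ℕ} (ha0 : a 0 = 0) (han : a n = 0) (h : a (n - 1) * a 1 ≠ 0) :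
    skewProdTerm a α n 1 = α 1 * α n := by
  obtain ⟨hn1, h1⟩ := mul_ne_zero_iff.mp h
  simp only [skewProdTerm, Nat.sub_self, ha0, han]
  field_simp
  ring

theorem summand_decomp_of_le (l : F) {n i : ℕ} (hin : i ≤ n)
    (hD : det !![a (i - 1), a i; a i, a (i + 1)] ≠ 0)
    (hA : i ≠ (n + 1) / 2 → det !![a (i - 1), a (n - i); a i, a (n - i + 1)] ≠ 0)
    (hB : i ≠ (n + 1) / 2 → det !![a i, a (n - i); a (i + 1), a (n - i + 1)] ≠ 0) :
    a (n - i) * l - a (n - i) / det !![a (i - 1), a i; a i, a (i + 1)] *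
        det !![a (i - 1), a i, α i; a i, a (i + 1), α (i + 1); α i, α (i + 1), l] -
      (if i = (n + 1) / 2 then 0 else
        a i * a (n - i) / (det !![a (i - 1), a i; a i, a (i + 1)] *
          det !![a (i - 1), a (n - i); a i, a (n - i + 1)] *
          det !![a i, a (n - i); a (i + 1), a (n - i + 1)])) *
        det !![a (i - 1), a i, a (n - i); a i, a (i + 1), a (n - i + 1);
          α i, α (i + 1), α (n - i + 1)] ^ 2 =
      α i * α (n + 1 - i) - skewProdTerm a α i (n + 1 - i) + skewSqTerm a α i (n - i) := by
  rw [show n + 1 - i = n - i + 1 by omega]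
  by_cases hmid : i = (n + 1) / 2
  · -- at the middle index `n - i ∈ {i, i - 1}`, so one of the two skew terms vanishes
    rw [if_pos hmid, zero_mul, sub_zero]
    rcases Nat.even_or_odd n with ⟨k, hk⟩ | ⟨k, hk⟩
    · rw [show n - i = i by omega]
      exact summand_decomp_diag α l i hD
    · rw [show n - i = i - 1 by omega, Nat.sub_add_cancel (by omega)]
      exact summand_decomp_subdiag α l (by omega) hD
  · rw [if_neg hmid]
    exact summand_decomp_of_ne_zero α l i (n - i) hD (hA hmid) (hB hmid)

end

/-- Lemma 3.13 of the paper (`caso0_PnxPn`): the decomposition identity for the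
self-intersection expression of an `n`-dimensional subvariety of ℙ^{n-1}×ℙ^{n-1}.
The `a i` play the role of indeterminates (conventions `a 0 = a n = 0`), which is
expressed by working over an arbitrary field and assuming the generic nonvanishing
of the determinant denominators; `d ⌈n/2⌉ := 0` and the corresponding square term
vanishes. The identity holds for all values of the indeterminates `α`, `λ`. -/
theorem stmt_5 (F : Type*) [Field F] (n : ℕ) (hn : 3 ≤ n) (a : ℕ → F)
    (ha0 : a 0 = 0) (han : a n = 0)
    (hΔ : ∀ i, 1 ≤ i → i ≤ n - 1 → Matrix.det !![a (i - 1), a i; a i, a (i + 1)] ≠ 0)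
    (hΔ' : ∀ i, 1 ≤ i → i ≤ n - 1 → i ≠ (n + 1) / 2 →
      Matrix.det !![a (i - 1), a (n - i); a i, a (n - i + 1)] ≠ 0)
    (hΔ'' : ∀ i, 1 ≤ i → i ≤ n - 1 → i ≠ (n + 1) / 2 →
      Matrix.det !![a i, a (n - i); a (i + 1), a (n - i + 1)] ≠ 0) :
    ∀ α lam : ℕ → F,
      (∑ i ∈ Finset.Icc 1 n, α i * α (n + 1 - i)) -
          (∑ i ∈ Finset.Icc 1 (n - 1), a (n - i) * lam i) =
        -(∑ i ∈ Finset.Icc 1 (n - 1),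
            (a (n - i) / Matrix.det !![a (i - 1), a i; a i, a (i + 1)]) *
              Matrix.det !![a (i - 1), a i, α i;
                            a i, a (i + 1), α (i + 1);
                            α i, α (i + 1), lam i])
        - ∑ i ∈ Finset.Icc 1 (n - 1),
            (if i = (n + 1) / 2 then 0 else
              a i * a (n - i) /
                (Matrix.det !![a (i - 1), a i; a i, a (i + 1)] *
                  Matrix.det !![a (i - 1), a (n - i); a i, a (n - i + 1)] *
                  Matrix.det !![a i, a (n - i); a (i + 1), a (n - i + 1)])) *
              (Matrix.det !![a (i - 1), a i, a (n - i);
                             a i, a (i + 1), a (n - i + 1);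
                             α i, α (i + 1), α (n - i + 1)]) ^ 2 := by
  intro α lam
  have hbdry : a (n - 1) * a 1 ≠ 0 := by
    have h := hΔ' 1 le_rfl (by omega) (by omega)
    rwa [det_fin_two_of, Nat.sub_self, Nat.sub_add_cancel (by omega : 1 ≤ n), ha0, han, zero_mul,
      zero_sub, neg_ne_zero] at h
  have hIcc : Icc 1 n = insert n (Icc 1 (n - 1)) := (insert_Icc_sub_one_right_eq_Icc (by omega)).symm
  have hn_notMem : n ∉ Icc 1 (n - 1) := by rw [mem_Icc]; omega
  have hC : ∑ i ∈ Icc 1 (n - 1), skewSqTerm a α i (n - i) = 0 :=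
    sum_Icc_reflect_eq_zero _ (skewSqTerm_swap a α) (skewSqTerm_self a α) 1 n
  have hP := sum_Icc_reflect_eq_zero _ (skewProdTerm_swap a α) (skewProdTerm_self a α) 1 (n + 1)
  rw [Nat.add_sub_cancel, hIcc, sum_insert hn_notMem, Nat.add_sub_cancel_left,
    skewProdTerm_boundary α ha0 han hbdry] at hP
  have key := sum_congr rfl fun i (hi : i ∈ Icc 1 (n - 1)) =>
    have hi := mem_Icc.mp hi
    summand_decomp_of_le α (lam i) (hi.2.trans (Nat.sub_le n 1)) (hΔ i hi.1 hi.2)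
      (hΔ' i hi.1 hi.2) (hΔ'' i hi.1 hi.2)
  simp only [sum_sub_distrib, sum_add_distrib, hC] at key
  rw [hIcc, sum_insert hn_notMem, Nat.add_sub_cancel_left]
  linear_combination hP - key
end

section
/- Let a_1, a_2, α_1, α_2, λ_1, λ_2 be real numbers with a_1 ≠ 0. Suppose 2α_1α_2 − a_1λ_2 − a_2λ_1 = 0, det3(a_2, a_1, α_2; a_1, 0, α_1; α_2, α_1, λ_2) = 0 and det(a_1, α_1; α_1, λ_1) = 0. Then the 3×4 matrix [[a_2, a_1, α_2, α_1],[a_1, 0, α_1, 0],[α_2, α_1, λ_2, λ_1]] has rank 2. -/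
/-- Rank conclusion of Example 4.3 of the paper (`Y = C × ℙ⁵`): vanishing of both
determinants in the decomposition of `P` implies that the 3×4 intersection matrix
of `H`, `F`, `D` has rank two. -/
theorem stmt_13 (a₁ a₂ α₁ α₂ l₁ l₂ : ℝ) (ha₁ : a₁ ≠ 0)
    (hP : 2 * α₁ * α₂ - a₁ * l₂ - a₂ * l₁ = 0)
    (h3 : Matrix.det !![a₂, a₁, α₂; a₁, 0, α₁; α₂, α₁, l₂] = 0)
    (h2 : Matrix.det !![a₁, α₁; α₁, l₁] = 0) :
    (!![a₂, a₁, α₂, α₁; a₁, 0, α₁, 0; α₂, α₁, l₂, l₁] :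
      Matrix (Fin 3) (Fin 4) ℝ).rank = 2 := by
  rw [Matrix.det_fin_three] at h3
  rw [Matrix.det_fin_two] at h2
  simp at h3 h2
  set M : Matrix (Fin 3) (Fin 4) ℝ := !![a₂, a₁, α₂, α₁; a₁, 0, α₁, 0; α₂, α₁, l₂, l₁] with hM
  apply le_antisymm
  · -- upper bound : M factors through a 2-dimensional space
    set x : ℝ := α₁ / a₁
    set y : ℝ := (a₁ * α₂ - a₂ * α₁) / (a₁ * a₁)
    have hfac : M = (!![1, 0; 0, 1; x, y] : Matrix (Fin 3) (Fin 2) ℝ) *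
        (!![a₂, a₁, α₂, α₁; a₁, 0, α₁, 0] : Matrix (Fin 2) (Fin 4) ℝ) := by
      ext i j
      fin_cases i <;> fin_cases j <;>
        simp [hM, Matrix.mul_apply, Fin.sum_univ_two, x, y] <;>
        field_simp <;>
        first
          | ring1
          | linear_combination a₁ * h3
          | linear_combination -(a₁ * h3)
          | linear_combination h3
          | linear_combination -h3
          | linear_combination h2
          | linear_combination -h2
          | linear_combination a₁ * h2
          | linear_combination -(a₁ * h2)
    calc M.rank ≤ (!![a₂, a₁, α₂, α₁; a₁, 0, α₁, 0] :
          Matrix (Fin 2) (Fin 4) ℝ).rank := by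
            rw [hfac]; exact Matrix.rank_mul_le_right _ _
      _ ≤ 2 := (Matrix.rank_le_card_height _).trans (le_of_eq (Fintype.card_fin 2))
  · -- lower bound : an invertible 2×2 minor
    have hB : IsUnit (!![a₂, a₁; a₁, 0] : Matrix (Fin 2) (Fin 2) ℝ) := by
      rw [Matrix.isUnit_iff_isUnit_det, Matrix.det_fin_two_of]
      simp only [isUnit_iff_ne_zero]
      intro h
      apply ha₁
      nlinarith [h]
    have hBrank : (!![a₂, a₁; a₁, 0] : Matrix (Fin 2) (Fin 2) ℝ).rank = 2 := by
      simpa using Matrix.rank_of_isUnit _ hB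
    have hprod : (!![(1:ℝ), 0, 0; 0, 1, 0] : Matrix (Fin 2) (Fin 3) ℝ) * M *
        (!![1, 0; 0, 1; 0, 0; 0, 0] : Matrix (Fin 4) (Fin 2) ℝ) =
        !![a₂, a₁; a₁, 0] := by
      ext i j
      fin_cases i <;> fin_cases j <;>
        simp [hM, Matrix.mul_apply, Fin.sum_univ_succ]
    calc (2 : ℕ) = (!![a₂, a₁; a₁, 0] : Matrix (Fin 2) (Fin 2) ℝ).rank := hBrank.symm
      _ ≤ ((!![(1:ℝ), 0, 0; 0, 1, 0] : Matrix (Fin 2) (Fin 3) ℝ) * M).rank := by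
          rw [← hprod]; exact Matrix.rank_mul_le_left _ _
      _ ≤ M.rank := Matrix.rank_mul_le_right _ _
end

section
/- Let a_{σ}, a_{i-1}, a_i, a_{i+1}, a_{n-i}, a_{n-i+1}, α_{σ}, α_{i+1} be real numbers with a_σ ≠ 0 and a_{i-1}a_{n-i+1} = a_i a_{n-i} (i.e. σ(n-i+1) = σ(i)), and suppose α_i is replaced by (a_i/a_σ)·α_σ. Then det3(a_{i-1}, a_i, a_{n-i}; a_i, a_{i+1}, a_{n-i+1}; (a_i/a_σ)α_σ, α_{i+1}, (a_{n-i+1}/a_σ)α_σ) equals (−1/a_σ)·det(a_{i-1}, a_{n-i}; a_i, a_{n-i+1})·det(a_σ, a_{i+1}; α_σ, α_{i+1}). -/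
/-- Lemma 3.17(iv) of the paper (`incordiones_PnxPn`): after the substitutions
`α i = (a i / a σ) * α σ` and `α (n-i+1) = (a (n-i+1) / a σ) * α σ`, and under the
hypothesis `a (i-1) * a (n-i+1) = a i * a (n-i)` (i.e. `σ(n-i+1) = σ(i)`), the 3×3
determinant `r_{i,i+1,n-i+1}` factors as stated.  Here `p = a (i-1)`, `q = a i`,
`r = a (i+1)`, `s = a (n-i)`, `t = a (n-i+1)`, `w = a σ`, `u = α σ`, `v = α (i+1)`. -/
theorem stmt_16 (p q r s t w u v : ℝ) (hw : w ≠ 0)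
    (hblock : p * t = q * s) :
    Matrix.det !![p, q, s; q, r, t; (q / w) * u, v, (t / w) * u] =
      (-1 / w) * Matrix.det !![p, s; q, t] * Matrix.det !![w, r; u, v] := by
  simp [Matrix.det_fin_three, Matrix.det_fin_two_of]
  field_simp
  ring_nf
end
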